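/- arXiv:2506.03109 — 3 statements merged into one kernel-verified Lean document; each statement's English description precedes it below -/
import Mathlib

section
/- Let X be a measurable space with probability measure μ, and let G_sw, G_w, G_star : X → (probability vectors on Fin k) be measurable maps such that the functions x ↦ D_f(G_sw x ‖ G_star x), x ↦ D_f(G_w x ‖ G_star x) and x ↦ D_f(G_sw x ‖ G_w x) are μ-integrable. Let f : ℝ → ℝ be convex, differentiable on (0,∞), with f(1) = 0. Suppose there is L ≥ 0 such that for every x ∈ X and every index i, |f'(t)| ≤ L for all t in the closed interval with endpoints (G_sw x) i / (G_star x) i and (G_w x) i / (G_star x) i, and suppose there is C ≥ 0 such that TV(G_sw x, G_w x) ≤ C * Real.sqrt (D_f(G_sw x ‖ G_w x)) for every x ∈ X. Then |R_f(G_sw, G_star) − R_f(G_w, G_star)| ≤ 2 * L * C * Real.sqrt (R_f(G_sw, G_w)). -/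
open scoped BigOperators
open MeasureTheory

/-- `p` is a probability vector on `Fin k`: all coordinates positive, summing to one. -/
def IsProbVec {k : ℕ} (p : Fin k → ℝ) : Prop :=
  (∀ i, 0 < p i) ∧ ∑ i, p i = 1

/-- Discrete `f`-divergence `D_f(p‖q) = ∑ i, q i * f (p i / q i)`. -/
noncomputable def fDiv {k : ℕ} (f : ℝ → ℝ) (p q : Fin k → ℝ) : ℝ :=
  ∑ i, q i * f (p i / q i)

/-- Total variation distance `TV(p,q) = (1/2) ∑ i, |p i − q i|`. -/
noncomputable def tvDist {k : ℕ} (p q : Fin k → ℝ) : ℝ :=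
  (1 / 2) * ∑ i, |p i - q i|

/-- Population disagreement `R_f(g,h) = ∫ D_f(g x ‖ h x) ∂μ`. -/
noncomputable def popDis {k : ℕ} {X : Type*} [MeasurableSpace X] (μ : Measure X)
    (f : ℝ → ℝ) (g h : X → Fin k → ℝ) : ℝ :=
  ∫ x, fDiv f (g x) (h x) ∂μ

/-!
Pointwise, the mean value theorem with `|f'| ≤ L` on the segment between the two likelihood
ratios gives `|D_f(p‖r) - D_f(q‖r)| ≤ L ∑ i, |p i - q i| = 2 L TV(p, q)`, which the hypothesis on
`TV` turns into `2 L C √D_f(p‖q)`. Integrating, and bounding `∫ √D_f ≤ √(∫ D_f)` by Jensen's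
inequality for the concave square root (legitimate since `D_f ≥ 0`, again by Jensen), gives the
claim.
-/

lemma fDiv_nonneg {k : ℕ} {f : ℝ → ℝ} (hconv : ConvexOn ℝ Set.univ f) (hf1 : f 1 = 0)
    {p q : Fin k → ℝ} (hp : ∑ i, p i = 1) (hq : IsProbVec q) : 0 ≤ fDiv f p q := by
  have hmean : ∑ i, q i • (p i / q i) = 1 := by
    rw [← hp]
    exact Finset.sum_congr rfl fun i _ => mul_div_cancel₀ _ (hq.1 i).ne'
  have hjensen := hconv.map_sum_le (t := Finset.univ) (p := fun i => p i / q i)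
    (fun i _ => (hq.1 i).le) hq.2 (fun i _ => Set.mem_univ _)
  rw [hmean, hf1] at hjensen
  simpa only [fDiv, smul_eq_mul] using hjensen

lemma mul_abs_sub_le_of_abs_deriv_le {f : ℝ → ℝ} {a b r L : ℝ} (hr : 0 < r)
    (hdiff : ∀ t ∈ Set.uIcc (a / r) (b / r), DifferentiableAt ℝ f t)
    (hderiv : ∀ t ∈ Set.uIcc (a / r) (b / r), |deriv f t| ≤ L) :
    r * |f (a / r) - f (b / r)| ≤ L * |a - b| := by
  have hlip : |f (a / r) - f (b / r)| ≤ L * |a / r - b / r| :=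
    Convex.norm_image_sub_le_of_norm_deriv_le hdiff hderiv (convex_uIcc _ _)
      Set.right_mem_uIcc Set.left_mem_uIcc
  calc r * |f (a / r) - f (b / r)| ≤ r * (L * |a / r - b / r|) := by gcongr
    _ = L * |a - b| := by
      rw [div_sub_div_same, abs_div, abs_of_pos hr]
      field_simp

lemma abs_fDiv_sub_fDiv_le {k : ℕ} {f : ℝ → ℝ} {p q r : Fin k → ℝ} {L : ℝ} (hr : ∀ i, 0 < r i)
    (hdiff : ∀ i, ∀ t ∈ Set.uIcc (p i / r i) (q i / r i), DifferentiableAt ℝ f t)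
    (hderiv : ∀ i, ∀ t ∈ Set.uIcc (p i / r i) (q i / r i), |deriv f t| ≤ L) :
    |fDiv f p r - fDiv f q r| ≤ 2 * L * tvDist p q := by
  calc |fDiv f p r - fDiv f q r| = |∑ i, r i * (f (p i / r i) - f (q i / r i))| := by
        simp only [fDiv, mul_sub, Finset.sum_sub_distrib]
    _ ≤ ∑ i, r i * |f (p i / r i) - f (q i / r i)| := by
        refine (Finset.abs_sum_le_sum_abs _ _).trans_eq (Finset.sum_congr rfl fun i _ => ?_)
        rw [abs_mul, abs_of_pos (hr i)]
    _ ≤ ∑ i, L * |p i - q i| := Finset.sum_le_sum fun i _ =>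
        mul_abs_sub_le_of_abs_deriv_le (hr i) (hdiff i) (hderiv i)
    _ = 2 * L * tvDist p q := by
        rw [tvDist, ← Finset.mul_sum]
        ring

lemma Set.uIcc_subset_Ioi {α : Type*} [LinearOrder α] {a b c : α} (ha : c < a) (hb : c < b) :
    Set.uIcc a b ⊆ Set.Ioi c :=
  fun _ ht => lt_of_lt_of_le (lt_min ha hb) ht.1

lemma MeasureTheory.Integrable.sqrt {X : Type*} [MeasurableSpace X] {μ : Measure X}
    [IsFiniteMeasure μ]
    {g : X → ℝ} (hg : Integrable g μ) : Integrable (fun x => Real.sqrt (g x)) μ := by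
  refine (hg.abs.add (integrable_const 1)).mono'
    (Real.continuous_sqrt.comp_aestronglyMeasurable hg.aestronglyMeasurable) ?_
  refine Filter.Eventually.of_forall fun x => ?_
  rw [Real.norm_eq_abs, abs_of_nonneg (Real.sqrt_nonneg _), Pi.add_apply, Real.sqrt_le_iff]
  constructor
  · positivity
  · nlinarith [abs_nonneg (g x), le_abs_self (g x)]

lemma integral_sqrt_le_sqrt_integral {X : Type*} [MeasurableSpace X] {μ : Measure X}
    [IsProbabilityMeasure μ] {g : X → ℝ} (hg : Integrable g μ) (hg0 : ∀ᵐ x ∂μ, 0 ≤ g x) :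
    ∫ x, Real.sqrt (g x) ∂μ ≤ Real.sqrt (∫ x, g x ∂μ) :=
  Real.strictConcaveOn_sqrt.concaveOn.le_map_integral Real.continuous_sqrt.continuousOn
    isClosed_Ici hg0 hg hg.sqrt

theorem stmt1_general {k : ℕ} {X : Type*} [MeasurableSpace X]
    (μ : Measure X) [IsProbabilityMeasure μ]
    (Gsw Gw Gstar : X → Fin k → ℝ)
    (hGswP : ∀ x, IsProbVec (Gsw x)) (hGwP : ∀ x, IsProbVec (Gw x))
    (hGstarP : ∀ x, IsProbVec (Gstar x))
    (f : ℝ → ℝ) (hconv : ConvexOn ℝ Set.univ f)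
    (hdiff : DifferentiableOn ℝ f (Set.Ioi (0 : ℝ))) (hf1 : f 1 = 0)
    (hint1 : Integrable (fun x => fDiv f (Gsw x) (Gstar x)) μ)
    (hint2 : Integrable (fun x => fDiv f (Gw x) (Gstar x)) μ)
    (hint3 : Integrable (fun x => fDiv f (Gsw x) (Gw x)) μ)
    (L : ℝ) (hL : 0 ≤ L)
    (hL' : ∀ (x : X) (i : Fin k) (t : ℝ),
      t ∈ Set.uIcc (Gsw x i / Gstar x i) (Gw x i / Gstar x i) → |deriv f t| ≤ L)
    (C : ℝ) (hC : 0 ≤ C)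
    (hTV : ∀ x, tvDist (Gsw x) (Gw x) ≤ C * Real.sqrt (fDiv f (Gsw x) (Gw x))) :
    |popDis μ f Gsw Gstar - popDis μ f Gw Gstar| ≤
      2 * L * C * Real.sqrt (popDis μ f Gsw Gw) := by
  have hpointwise : ∀ x, |fDiv f (Gsw x) (Gstar x) - fDiv f (Gw x) (Gstar x)| ≤
      2 * L * C * Real.sqrt (fDiv f (Gsw x) (Gw x)) := fun x => by
    have hdiff_x : ∀ i, ∀ t ∈ Set.uIcc (Gsw x i / Gstar x i) (Gw x i / Gstar x i),
        DifferentiableAt ℝ f t := fun i t ht =>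
      hdiff.differentiableAt <| Ioi_mem_nhds <| Set.uIcc_subset_Ioi
        (div_pos ((hGswP x).1 i) ((hGstarP x).1 i)) (div_pos ((hGwP x).1 i) ((hGstarP x).1 i)) ht
    calc _ ≤ 2 * L * tvDist (Gsw x) (Gw x) :=
          abs_fDiv_sub_fDiv_le (hGstarP x).1 hdiff_x (hL' x)
      _ ≤ 2 * L * (C * Real.sqrt (fDiv f (Gsw x) (Gw x))) := by gcongr; exact hTV x
      _ = _ := by ring
  calc |popDis μ f Gsw Gstar - popDis μ f Gw Gstar|
      = |∫ x, (fDiv f (Gsw x) (Gstar x) - fDiv f (Gw x) (Gstar x)) ∂μ| := by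
        rw [popDis, popDis, integral_sub hint1 hint2]
    _ ≤ ∫ x, |fDiv f (Gsw x) (Gstar x) - fDiv f (Gw x) (Gstar x)| ∂μ :=
        abs_integral_le_integral_abs
    _ ≤ ∫ x, 2 * L * C * Real.sqrt (fDiv f (Gsw x) (Gw x)) ∂μ :=
        integral_mono (hint1.sub hint2).abs (hint3.sqrt.const_mul _) hpointwise
    _ = 2 * L * C * ∫ x, Real.sqrt (fDiv f (Gsw x) (Gw x)) ∂μ := integral_const_mul _ _
    _ ≤ 2 * L * C * Real.sqrt (popDis μ f Gsw Gw) := by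
        gcongr
        exact integral_sqrt_le_sqrt_integral hint3 <| Filter.Eventually.of_forall fun x =>
          fDiv_nonneg hconv hf1 (hGswP x).2 (hGwP x)

theorem stmt1 {k : ℕ} (hk : 2 ≤ k) {X : Type*} [MeasurableSpace X]
    (μ : Measure X) [IsProbabilityMeasure μ]
    (Gsw Gw Gstar : X → Fin k → ℝ)
    (hGsw : Measurable Gsw) (hGw : Measurable Gw) (hGstar : Measurable Gstar)
    (hGswP : ∀ x, IsProbVec (Gsw x)) (hGwP : ∀ x, IsProbVec (Gw x))
    (hGstarP : ∀ x, IsProbVec (Gstar x))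
    (f : ℝ → ℝ) (hconv : ConvexOn ℝ Set.univ f)
    (hdiff : DifferentiableOn ℝ f (Set.Ioi (0 : ℝ))) (hf1 : f 1 = 0)
    (hint1 : Integrable (fun x => fDiv f (Gsw x) (Gstar x)) μ)
    (hint2 : Integrable (fun x => fDiv f (Gw x) (Gstar x)) μ)
    (hint3 : Integrable (fun x => fDiv f (Gsw x) (Gw x)) μ)
    (L : ℝ) (hL : 0 ≤ L)
    (hL' : ∀ (x : X) (i : Fin k) (t : ℝ),
      t ∈ Set.uIcc (Gsw x i / Gstar x i) (Gw x i / Gstar x i) → |deriv f t| ≤ L)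
    (C : ℝ) (hC : 0 ≤ C)
    (hTV : ∀ x, tvDist (Gsw x) (Gw x) ≤ C * Real.sqrt (fDiv f (Gsw x) (Gw x))) :
    |popDis μ f Gsw Gstar - popDis μ f Gw Gstar| ≤
      2 * L * C * Real.sqrt (popDis μ f Gsw Gw) :=
  stmt1_general μ Gsw Gw Gstar hGswP hGwP hGstarP f hconv hdiff hf1 hint1 hint2 hint3 L hL hL' C hC
    hTV
end

section
/- Let (Θ, Q) be a probability space, f : (0,∞) → ℝ convex and differentiable, α > 0, β ∈ ℝ, and L : Θ → ℝ measurable. Let g̃ : Θ → (0,∞) be measurable with ∫ g̃ ∂Q = 1, f'(g̃(θ)) = −α * L(θ) − β for Q-almost every θ, and with f ∘ g̃ and L * g̃ Q-integrable. Then for every measurable g : Θ → (0,∞) with ∫ g ∂Q = 1 and f ∘ g, L * g Q-integrable, one has ∫ (f(g̃(θ)) + α * L(θ) * g̃(θ)) ∂Q(θ) ≤ ∫ (f(g(θ)) + α * L(θ) * g(θ)) ∂Q(θ). -/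
/-!
Convexity gives the tangent-line bound `f(g̃) + f'(g̃)(g - g̃) ≤ f(g)` pointwise. Substituting the
stationarity condition `f'(g̃) = -αL - β` turns it into
`f(g̃) + αLg̃ ≤ f(g) + αLg + β(g - g̃)`, and the multiplier term integrates to `β(1 - 1) = 0`.
-/

open MeasureTheory

theorem ConvexOn.add_deriv_mul_sub_le {S : Set ℝ} {f : ℝ → ℝ} (hfc : ConvexOn ℝ S f) {x y : ℝ}
    (hx : x ∈ S) (hy : y ∈ S) (hfd : DifferentiableAt ℝ f x) :
    f x + deriv f x * (y - x) ≤ f y := by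
  rcases lt_trichotomy x y with hxy | rfl | hyx
  · have h := hfc.deriv_le_slope hx hy hxy hfd
    rw [slope_def_field, le_div_iff₀ (sub_pos.2 hxy)] at h
    linarith
  · simp
  · have h := hfc.slope_le_deriv hy hx hyx hfd
    rw [slope_def_field, div_le_iff₀ (sub_pos.2 hyx)] at h
    linarith

theorem integral_le_of_ae_le_add_mul_sub {Θ : Type*} [MeasurableSpace Θ] {μ : Measure Θ}
    {F G g h : Θ → ℝ} (β : ℝ) (hF : Integrable F μ) (hG : Integrable G μ)
    (hg : Integrable g μ) (hh : Integrable h μ)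
    (hle : ∀ᵐ θ ∂μ, F θ ≤ G θ + β * (g θ - h θ)) (hgh : ∫ θ, g θ ∂μ = ∫ θ, h θ ∂μ) :
    ∫ θ, F θ ∂μ ≤ ∫ θ, G θ ∂μ := by
  have hmult : Integrable (fun θ => β * (g θ - h θ)) μ := (hg.sub hh).const_mul β
  calc ∫ θ, F θ ∂μ ≤ ∫ θ, (G θ + β * (g θ - h θ)) ∂μ := integral_mono_ae hF (hG.add hmult) hle
    _ = ∫ θ, G θ ∂μ := by
      rw [integral_add hG hmult, integral_const_mul, integral_sub hg hh, hgh, sub_self, mul_zero,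
        add_zero]

theorem stmt10_general {Θ : Type*} [MeasurableSpace Θ] (Q : Measure Θ)
    (f : ℝ → ℝ) (hconv : ConvexOn ℝ (Set.Ioi (0 : ℝ)) f)
    (hdiff : DifferentiableOn ℝ f (Set.Ioi (0 : ℝ)))
    (α : ℝ) (β : ℝ)
    (L : Θ → ℝ)
    (gt : Θ → ℝ) (hgtpos : ∀ θ, 0 < gt θ)
    (hgtnorm : ∫ θ, gt θ ∂Q = 1)
    (hstat : ∀ᵐ θ ∂Q, deriv f (gt θ) = -α * L θ - β)
    (hint1 : Integrable (fun θ => f (gt θ)) Q)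
    (hint2 : Integrable (fun θ => L θ * gt θ) Q) :
    ∀ g : Θ → ℝ, Measurable g → (∀ θ, 0 < g θ) → (∫ θ, g θ ∂Q = 1) →
      Integrable (fun θ => f (g θ)) Q → Integrable (fun θ => L θ * g θ) Q →
      ∫ θ, (f (gt θ) + α * L θ * gt θ) ∂Q ≤ ∫ θ, (f (g θ) + α * L θ * g θ) ∂Q := by
  intro g _ hgpos hgnorm hgi1 hgi2
  have objective_integrable : ∀ u : Θ → ℝ, Integrable (fun θ => f (u θ)) Q →
      Integrable (fun θ => L θ * u θ) Q → Integrable (fun θ => f (u θ) + α * L θ * u θ) Q :=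
    fun u hfu hLu => by simpa only [mul_assoc, Pi.add_def] using hfu.add (hLu.const_mul α)
  have tangent : ∀ᵐ θ ∂Q, f (gt θ) + α * L θ * gt θ ≤
      f (g θ) + α * L θ * g θ + β * (g θ - gt θ) := by
    filter_upwards [hstat] with θ hθ
    have h := hconv.add_deriv_mul_sub_le (hgtpos θ) (hgpos θ)
      ((hdiff _ (hgtpos θ)).differentiableAt (isOpen_Ioi.mem_nhds (hgtpos θ)))
    rw [hθ] at h
    linear_combination h
  exact integral_le_of_ae_le_add_mul_sub β (objective_integrable gt hint1 hint2)
    (objective_integrable g hgi1 hgi2) (.of_integral_ne_zero (by simp [hgnorm]))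
    (.of_integral_ne_zero (by simp [hgtnorm])) tangent (hgnorm.trans hgtnorm.symm)

theorem stmt10 {Θ : Type*} [MeasurableSpace Θ] (Q : Measure Θ) [IsProbabilityMeasure Q]
    (f : ℝ → ℝ) (hconv : ConvexOn ℝ (Set.Ioi (0 : ℝ)) f)
    (hdiff : DifferentiableOn ℝ f (Set.Ioi (0 : ℝ)))
    (α : ℝ) (hα : 0 < α) (β : ℝ)
    (L : Θ → ℝ) (hL : Measurable L)
    (gt : Θ → ℝ) (hgt : Measurable gt) (hgtpos : ∀ θ, 0 < gt θ)
    (hgtnorm : ∫ θ, gt θ ∂Q = 1)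
    (hstat : ∀ᵐ θ ∂Q, deriv f (gt θ) = -α * L θ - β)
    (hint1 : Integrable (fun θ => f (gt θ)) Q)
    (hint2 : Integrable (fun θ => L θ * gt θ) Q) :
    ∀ g : Θ → ℝ, Measurable g → (∀ θ, 0 < g θ) → (∫ θ, g θ ∂Q = 1) →
      Integrable (fun θ => f (g θ)) Q → Integrable (fun θ => L θ * g θ) Q →
      ∫ θ, (f (gt θ) + α * L θ * gt θ) ∂Q ≤ ∫ θ, (f (g θ) + α * L θ * g θ) ∂Q :=
  stmt10_general Q f hconv hdiff α β L gt hgtpos hgtnorm hstat hint1 hint2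
end

section
/- Let (Θ, Q) be a probability space, f : (0,∞) → ℝ strictly convex and differentiable, α > 0, β ∈ ℝ, and L : Θ → ℝ measurable. Let g̃ : Θ → (0,∞) be measurable with ∫ g̃ ∂Q = 1, f'(g̃(θ)) = −α * L(θ) − β for Q-almost every θ, and f ∘ g̃, L * g̃ Q-integrable. If g : Θ → (0,∞) is measurable with ∫ g ∂Q = 1, f ∘ g and L * g Q-integrable, and ∫ (f(g) + α * L * g) ∂Q = ∫ (f(g̃) + α * L * g̃) ∂Q, then g = g̃ Q-almost everywhere. -/
/-!
Let `c = -α L - β`, so that `f' (g̃) = c` almost everywhere. The Bregman divergence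
`D(g, g̃) = f(g) - f(g̃) - c (g - g̃)` is nonnegative, and strictly positive where `g ≠ g̃` by strict
convexity. Its integral is the difference of the two objective values plus `β (∫ g - ∫ g̃)`, which
vanishes; a nonnegative function with zero integral vanishes almost everywhere, so `g = g̃` a.e.
-/

open MeasureTheory

noncomputable def bregmanDiv (f : ℝ → ℝ) (x y : ℝ) : ℝ :=
  f x - f y - deriv f y * (x - y)

namespace StrictConvexOn

variable {S : Set ℝ} {f : ℝ → ℝ}

lemma add_deriv_mul_sub_lt (hf : StrictConvexOn ℝ S f) {x y : ℝ} (hx : x ∈ S) (hy : y ∈ S)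
    (hxy : y ≠ x) (hfx : DifferentiableAt ℝ f x) :
    f x + deriv f x * (y - x) < f y := by
  rcases hxy.lt_or_gt with hlt | hlt
  · have hslope := hf.slope_lt_deriv hy hx hlt hfx
    rw [slope_def_field, div_lt_iff₀ (sub_pos.2 hlt)] at hslope
    linarith
  · have hslope := hf.deriv_lt_slope hx hy hlt hfx
    rw [slope_def_field, lt_div_iff₀ (sub_pos.2 hlt)] at hslope
    linarith

lemma bregmanDiv_pos (hf : StrictConvexOn ℝ S f) {x y : ℝ} (hx : x ∈ S) (hy : y ∈ S)
    (hxy : x ≠ y) (hfy : DifferentiableAt ℝ f y) :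
    0 < bregmanDiv f x y := by
  have := hf.add_deriv_mul_sub_lt hy hx hxy hfy
  unfold bregmanDiv
  linarith

lemma bregmanDiv_nonneg (hf : StrictConvexOn ℝ S f) {x y : ℝ} (hx : x ∈ S) (hy : y ∈ S)
    (hfy : DifferentiableAt ℝ f y) :
    0 ≤ bregmanDiv f x y := by
  rcases eq_or_ne x y with rfl | hxy
  · simp [bregmanDiv]
  · exact (hf.bregmanDiv_pos hx hy hxy hfy).le

lemma ae_eq_of_integral_bregmanDiv_eq_zero {Θ : Type*} [MeasurableSpace Θ] {μ : Measure Θ}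
    (hf : StrictConvexOn ℝ S f) {u v : Θ → ℝ} (hu : ∀ᵐ θ ∂μ, u θ ∈ S) (hv : ∀ᵐ θ ∂μ, v θ ∈ S)
    (hfv : ∀ᵐ θ ∂μ, DifferentiableAt ℝ f (v θ))
    (hint : Integrable (fun θ => bregmanDiv f (u θ) (v θ)) μ)
    (hzero : ∫ θ, bregmanDiv f (u θ) (v θ) ∂μ = 0) :
    u =ᵐ[μ] v := by
  have hnonneg : 0 ≤ᵐ[μ] fun θ => bregmanDiv f (u θ) (v θ) := by
    filter_upwards [hu, hv, hfv] with θ hu hv hfv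
    exact hf.bregmanDiv_nonneg hu hv hfv
  have hae := (integral_eq_zero_iff_of_nonneg_ae hnonneg hint).1 hzero
  filter_upwards [hu, hv, hfv, hae] with θ hu hv hfv hθ
  by_contra hne
  exact (hf.bregmanDiv_pos hu hv hne hfv).ne' hθ

end StrictConvexOn

theorem stmt11_general {Θ : Type*} [MeasurableSpace Θ] (Q : Measure Θ)
    (f : ℝ → ℝ) (hconv : StrictConvexOn ℝ (Set.Ioi (0 : ℝ)) f)
    (hdiff : DifferentiableOn ℝ f (Set.Ioi (0 : ℝ)))
    (α : ℝ) (β : ℝ)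
    (L : Θ → ℝ)
    (gt : Θ → ℝ) (hgtpos : ∀ θ, 0 < gt θ)
    (hgtnorm : ∫ θ, gt θ ∂Q = 1)
    (hstat : ∀ᵐ θ ∂Q, deriv f (gt θ) = -α * L θ - β)
    (hint1 : Integrable (fun θ => f (gt θ)) Q)
    (hint2 : Integrable (fun θ => L θ * gt θ) Q)
    (g : Θ → ℝ) (hgpos : ∀ θ, 0 < g θ)
    (hgnorm : ∫ θ, g θ ∂Q = 1)
    (hint3 : Integrable (fun θ => f (g θ)) Q)
    (hint4 : Integrable (fun θ => L θ * g θ) Q)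
    (heq : ∫ θ, (f (g θ) + α * L θ * g θ) ∂Q = ∫ θ, (f (gt θ) + α * L θ * gt θ) ∂Q) :
    g =ᵐ[Q] gt := by
  have hgint : Integrable g Q := .of_integral_ne_zero (by simp [hgnorm])
  have hgtint : Integrable gt Q := .of_integral_ne_zero (by simp [hgtnorm])
  have hobj : Integrable (fun θ => f (g θ) + α * L θ * g θ) Q := by
    refine (hint3.add (hint4.const_mul α)).congr (.of_forall fun θ => ?_)
    simp only [Pi.add_apply, mul_assoc]
  have hobjt : Integrable (fun θ => f (gt θ) + α * L θ * gt θ) Q := by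
    refine (hint1.add (hint2.const_mul α)).congr (.of_forall fun θ => ?_)
    simp only [Pi.add_apply, mul_assoc]
  have hgap : Integrable (fun θ => (f (g θ) + α * L θ * g θ) - (f (gt θ) + α * L θ * gt θ)) Q :=
    hobj.sub hobjt
  have hshift : Integrable (fun θ => β * (g θ - gt θ)) Q := (hgint.sub hgtint).const_mul β
  have hbregman : (fun θ => bregmanDiv f (g θ) (gt θ)) =ᵐ[Q] fun θ =>
      (f (g θ) + α * L θ * g θ) - (f (gt θ) + α * L θ * gt θ) + β * (g θ - gt θ) := by
    filter_upwards [hstat] with θ hθ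
    rw [bregmanDiv, hθ]
    ring
  refine hconv.ae_eq_of_integral_bregmanDiv_eq_zero (.of_forall hgpos) (.of_forall hgtpos)
    (.of_forall fun θ => hdiff.differentiableAt (Ioi_mem_nhds (hgtpos θ)))
    ((hgap.add hshift).congr hbregman.symm) ?_
  rw [integral_congr_ae hbregman, integral_add hgap hshift, integral_sub hobj hobjt,
    integral_const_mul, integral_sub hgint hgtint, heq, hgnorm, hgtnorm]
  ring

theorem stmt11 {Θ : Type*} [MeasurableSpace Θ] (Q : Measure Θ) [IsProbabilityMeasure Q]
    (f : ℝ → ℝ) (hconv : StrictConvexOn ℝ (Set.Ioi (0 : ℝ)) f)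
    (hdiff : DifferentiableOn ℝ f (Set.Ioi (0 : ℝ)))
    (α : ℝ) (hα : 0 < α) (β : ℝ)
    (L : Θ → ℝ) (hL : Measurable L)
    (gt : Θ → ℝ) (hgt : Measurable gt) (hgtpos : ∀ θ, 0 < gt θ)
    (hgtnorm : ∫ θ, gt θ ∂Q = 1)
    (hstat : ∀ᵐ θ ∂Q, deriv f (gt θ) = -α * L θ - β)
    (hint1 : Integrable (fun θ => f (gt θ)) Q)
    (hint2 : Integrable (fun θ => L θ * gt θ) Q)
    (g : Θ → ℝ) (hg : Measurable g) (hgpos : ∀ θ, 0 < g θ)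
    (hgnorm : ∫ θ, g θ ∂Q = 1)
    (hint3 : Integrable (fun θ => f (g θ)) Q)
    (hint4 : Integrable (fun θ => L θ * g θ) Q)
    (heq : ∫ θ, (f (g θ) + α * L θ * g θ) ∂Q = ∫ θ, (f (gt θ) + α * L θ * gt θ) ∂Q) :
    g =ᵐ[Q] gt :=
  stmt11_general Q f hconv hdiff α β L gt hgtpos hgtnorm hstat hint1 hint2 g hgpos hgnorm hint3
    hint4 heq
end
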